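/- For every ν ∈ L^Z_0(𝔻*), the holomorphic function φ(z) = ∫_{𝔻*} ν(w)/(w − z)⁴ dA(w) on 𝔻 satisfies lim_{|z|→1} (1−|z|²)|φ(z)| = 0; that is, φ ∈ A^Z_0(𝔻). -/

import Mathlib

/-!
Split `𝔻*` at `|w| = 1 + t` with `t ≤ 1`. On the thin annulus
`|ν(w)| ≤ ε (|w|² - 1) ≤ 3ε |w - z|`, since `|w| - 1 ≤ |w| - |z| ≤ |w - z|` for `|z| < 1`;
outside it `|ν| ≤ C` and `|w - z| > t`. So `|ν(w) / (w - z)⁴|` is dominated by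
`3ε |w - z|⁻³ 1_{|w - z| > 1 - |z|} + C |w - z|⁻⁴ 1_{|w - z| > t}`, whose integral, computed in
polar coordinates, is `6πε / (1 - |z|) + πC / t²`. Multiplying by `1 - |z|² ≤ 2 (1 - |z|)`
bounds `(1 - |z|²) |φ(z)|` by `12πε + 2πC (1 - |z|) / t²`.
-/

open MeasureTheory Metric

/-- The exterior disk `𝔻* = {z : |z| > 1}`. -/
def extDisk : Set ℂ := {z : ℂ | 1 < ‖z‖}

/-- `ν ∈ L^Z(𝔻*)`: measurable with finite Z-norm. -/
def memLZ (ν : ℂ → ℂ) : Prop :=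
  Measurable ν ∧ ∃ C : ℝ, ∀ᵐ w : ℂ ∂volume, 1 < ‖w‖ →
    max ((‖w‖ ^ 2 - 1)⁻¹) 1 * ‖ν w‖ ≤ C

/-- The little Zygmund condition:
`lim_{t→0} ess sup_{1<|w|<1+t} (|w|²−1)⁻¹ |ν(w)| = 0`. -/
def littleLZ (ν : ℂ → ℂ) : Prop :=
  ∀ ε : ℝ, 0 < ε → ∃ t : ℝ, 0 < t ∧ ∀ᵐ w : ℂ ∂volume,
    1 < ‖w‖ → ‖w‖ < 1 + t →
      (‖w‖ ^ 2 - 1)⁻¹ * ‖ν w‖ ≤ ε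

open Set

lemma pow_pred_mul_indicator_rpow_neg {n : ℕ} (hn : n ≠ 0) {p r y : ℝ} (hy : 0 < y) :
    y ^ (n - 1) * (Ioi r).indicator (fun s : ℝ ↦ s ^ (-p)) y =
      (Ioi r).indicator (fun s : ℝ ↦ s ^ ((n : ℝ) - 1 - p)) y := by
  by_cases hyr : y ∈ Ioi r
  · rw [indicator_of_mem hyr, indicator_of_mem hyr, ← Real.rpow_natCast,
      Nat.cast_pred (Nat.pos_of_ne_zero hn), ← Real.rpow_add hy, sub_eq_add_neg _ p]
  · simp [indicator_of_notMem hyr]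

section

variable {E : Type*} [NormedAddCommGroup E] [NormedSpace ℝ E] [FiniteDimensional ℝ E]
  [MeasurableSpace E] [BorelSpace E] [Nontrivial E] (μ : Measure E) [μ.IsAddHaarMeasure]
  {p r : ℝ}

lemma integrable_indicator_rpow_neg_norm (hr : 0 < r) (hp : Module.finrank ℝ E < p) :
    Integrable (fun x : E ↦ (Ioi r).indicator (fun s : ℝ ↦ s ^ (-p)) ‖x‖) μ := by
  rw [integrable_fun_norm_addHaar μ]
  have hint : IntegrableOn (fun s : ℝ ↦ s ^ ((Module.finrank ℝ E : ℝ) - 1 - p)) (Ioi r) :=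
    integrableOn_Ioi_rpow_of_lt (by linarith) hr
  refine ((integrable_indicator_iff measurableSet_Ioi).2 hint).integrableOn.congr_fun
    (fun y hy ↦ ?_) measurableSet_Ioi
  exact (pow_pred_mul_indicator_rpow_neg Module.finrank_pos.ne' hy).symm

lemma integral_indicator_rpow_neg_norm (hr : 0 < r) (hp : Module.finrank ℝ E < p) :
    ∫ x : E, (Ioi r).indicator (fun s : ℝ ↦ s ^ (-p)) ‖x‖ ∂μ =
      Module.finrank ℝ E * μ.real (ball 0 1) *
        (r ^ ((Module.finrank ℝ E : ℝ) - p) / (p - Module.finrank ℝ E)) := by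
  simp_rw [integral_fun_norm_addHaar μ, smul_eq_mul]
  rw [setIntegral_congr_fun measurableSet_Ioi
    (fun y hy ↦ pow_pred_mul_indicator_rpow_neg Module.finrank_pos.ne' hy),
    setIntegral_indicator measurableSet_Ioi, Ioi_inter_Ioi, sup_eq_right.2 hr.le,
    integral_Ioi_rpow_of_lt (by linarith) hr, nsmul_eq_mul,
    show (Module.finrank ℝ E : ℝ) - 1 - p + 1 = Module.finrank ℝ E - p by ring, neg_div,
    ← div_neg, neg_sub, mul_assoc]

end

lemma Complex.integral_indicator_rpow_neg_norm_sub {p r : ℝ} (hr : 0 < r) (hp : 2 < p) (z : ℂ) :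
    ∫ w : ℂ, (Ioi r).indicator (fun s : ℝ ↦ s ^ (-p)) ‖w - z‖ =
      2 * Real.pi * (r ^ (2 - p) / (p - 2)) := by
  rw [integral_sub_right_eq_self (fun w : ℂ ↦ (Ioi r).indicator (fun s : ℝ ↦ s ^ (-p)) ‖w‖) z,
    integral_indicator_rpow_neg_norm volume hr (by simpa using hp)]
  simp [Measure.real, Complex.volume_ball]

lemma Complex.integrable_indicator_rpow_neg_norm_sub {p r : ℝ} (hr : 0 < r) (hp : 2 < p) (z : ℂ) :
    Integrable (fun w : ℂ ↦ (Ioi r).indicator (fun s : ℝ ↦ s ^ (-p)) ‖w - z‖) :=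
  (integrable_indicator_rpow_neg_norm volume hr (by simpa using hp)).comp_sub_right z

lemma norm_div_pow_four_le {v w z : ℂ} {a b t : ℝ} (ha : 0 ≤ a) (hb : 0 ≤ b) (ht1 : t ≤ 1)
    (hz : ‖z‖ < 1) (hw : 1 < ‖w‖) (hnear : ‖w‖ < 1 + t → ‖v‖ ≤ a * (‖w‖ ^ 2 - 1))
    (hfar : ‖v‖ ≤ b) :
    ‖v / (w - z) ^ 4‖ ≤
      3 * a * (Ioi (1 - ‖z‖)).indicator (fun s : ℝ ↦ s ^ (-3 : ℝ)) ‖w - z‖ +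
        b * (Ioi t).indicator (fun s : ℝ ↦ s ^ (-4 : ℝ)) ‖w - z‖ := by
  set s := ‖w - z‖
  have hs : ‖w‖ - ‖z‖ ≤ s := norm_sub_norm_le w z
  have hs0 : 0 < s := by linarith
  have hnonneg : 0 ≤ (Ioi t).indicator (fun s : ℝ ↦ s ^ (-4 : ℝ)) s :=
    indicator_apply_nonneg fun _ ↦ Real.rpow_nonneg hs0.le _
  rw [norm_div, norm_pow, indicator_of_mem (show s ∈ Ioi (1 - ‖z‖) by simp; linarith),
    Real.rpow_neg hs0.le, Real.rpow_ofNat]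
  by_cases hwt : ‖w‖ < 1 + t
  · have hv : ‖v‖ ≤ 3 * a * s := calc
      ‖v‖ ≤ a * (‖w‖ ^ 2 - 1) := hnear hwt
      _ ≤ a * (3 * s) := by gcongr; nlinarith
      _ = 3 * a * s := by ring
    calc ‖v‖ / s ^ 4 ≤ 3 * a * s / s ^ 4 := by gcongr
      _ = 3 * a * (s ^ 3)⁻¹ := by field_simp
      _ ≤ _ := le_add_of_nonneg_right (mul_nonneg hb hnonneg)
  · rw [indicator_of_mem (show s ∈ Ioi t by simp; linarith), Real.rpow_neg hs0.le,
      Real.rpow_ofNat]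
    calc ‖v‖ / s ^ 4 ≤ b * (s ^ 4)⁻¹ := by rw [← div_eq_mul_inv]; gcongr
      _ ≤ _ := le_add_of_nonneg_left (by positivity)

lemma measurableSet_extDisk : MeasurableSet extDisk :=
  measurableSet_lt measurable_const measurable_norm

lemma norm_setIntegral_extDisk_le {ν : ℂ → ℂ} {a b t : ℝ} (ha : 0 ≤ a) (hb : 0 ≤ b)
    (ht : 0 < t) (ht1 : t ≤ 1)
    (hnear : ∀ᵐ w : ℂ, 1 < ‖w‖ → ‖w‖ < 1 + t → ‖ν w‖ ≤ a * (‖w‖ ^ 2 - 1))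
    (hfar : ∀ᵐ w : ℂ, 1 < ‖w‖ → ‖ν w‖ ≤ b) {z : ℂ} (hz : ‖z‖ < 1) :
    ‖∫ w in extDisk, ν w / (w - z) ^ 4‖ ≤
      6 * Real.pi * a / (1 - ‖z‖) + Real.pi * b / t ^ 2 := by
  have hδ : 0 < 1 - ‖z‖ := by linarith
  set F : ℝ → ℝ → ℂ → ℝ := fun r p w ↦ (Ioi r).indicator (fun s : ℝ ↦ s ^ (-p)) ‖w - z‖
  have hF0 : ∀ r p w, 0 < r → 0 ≤ F r p w := fun r p w hr ↦
    indicator_apply_nonneg fun hs ↦ Real.rpow_nonneg (hr.trans hs).le _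
  have h3 : Integrable (F (1 - ‖z‖) 3) :=
    Complex.integrable_indicator_rpow_neg_norm_sub hδ (by norm_num) z
  have h4 : Integrable (F t 4) := Complex.integrable_indicator_rpow_neg_norm_sub ht (by norm_num) z
  set g : ℂ → ℝ := fun w ↦ 3 * a * F (1 - ‖z‖) 3 w + b * F t 4 w
  have hg : Integrable g := (h3.const_mul _).add (h4.const_mul _)
  have hle : ∀ᵐ w ∂volume.restrict extDisk, ‖ν w / (w - z) ^ 4‖ ≤ g w := by
    rw [ae_restrict_iff' measurableSet_extDisk]
    filter_upwards [hnear, hfar] with w hwnear hwfar hw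
    exact norm_div_pow_four_le ha hb ht1 hz hw (hwnear hw) (hwfar hw)
  have hg0 : 0 ≤ g := fun w ↦
    add_nonneg (mul_nonneg (by positivity) (hF0 _ _ w hδ)) (mul_nonneg hb (hF0 _ _ w ht))
  calc ‖∫ w in extDisk, ν w / (w - z) ^ 4‖ ≤ ∫ w in extDisk, g w :=
        norm_integral_le_of_norm_le hg.integrableOn hle
    _ ≤ ∫ w, g w := setIntegral_le_integral hg (.of_forall hg0)
    _ = 6 * Real.pi * a / (1 - ‖z‖) + Real.pi * b / t ^ 2 := by
      rw [integral_add (h3.const_mul _) (h4.const_mul _), integral_const_mul, integral_const_mul,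
        Complex.integral_indicator_rpow_neg_norm_sub hδ (by norm_num),
        Complex.integral_indicator_rpow_neg_norm_sub ht (by norm_num)]
      norm_num [Real.rpow_neg_one, Real.rpow_neg ht.le]
      field_simp
      ring

lemma one_sub_sq_mul_norm_setIntegral_extDisk_le {ν : ℂ → ℂ} {a b t : ℝ} (ha : 0 ≤ a)
    (hb : 0 ≤ b) (ht : 0 < t) (ht1 : t ≤ 1)
    (hnear : ∀ᵐ w : ℂ, 1 < ‖w‖ → ‖w‖ < 1 + t → ‖ν w‖ ≤ a * (‖w‖ ^ 2 - 1))
    (hfar : ∀ᵐ w : ℂ, 1 < ‖w‖ → ‖ν w‖ ≤ b) {z : ℂ} (hz : ‖z‖ < 1) :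
    (1 - ‖z‖ ^ 2) * ‖∫ w in extDisk, ν w / (w - z) ^ 4‖ ≤
      12 * Real.pi * a + 2 * Real.pi * b / t ^ 2 * (1 - ‖z‖) := by
  have hδ : 0 < 1 - ‖z‖ := by linarith
  calc (1 - ‖z‖ ^ 2) * ‖∫ w in extDisk, ν w / (w - z) ^ 4‖
      ≤ 2 * (1 - ‖z‖) * (6 * Real.pi * a / (1 - ‖z‖) + Real.pi * b / t ^ 2) :=
        mul_le_mul (by nlinarith [norm_nonneg z])
          (norm_setIntegral_extDisk_le ha hb ht ht1 hnear hfar hz) (norm_nonneg _) (by positivity)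
    _ = 12 * Real.pi * a + 2 * Real.pi * b / t ^ 2 * (1 - ‖z‖) := by
      field_simp
      ring

lemma memLZ.exists_ae_norm_le {ν : ℂ → ℂ} (hν : memLZ ν) :
    ∃ C, 0 ≤ C ∧ ∀ᵐ w : ℂ, 1 < ‖w‖ → ‖ν w‖ ≤ C ∧ ‖ν w‖ ≤ C * (‖w‖ ^ 2 - 1) := by
  obtain ⟨-, C, hC⟩ := hν
  refine ⟨max C 0, le_max_right _ _, hC.mono fun w hw hw1 ↦ ?_⟩
  have hx : 0 < ‖w‖ ^ 2 - 1 := by nlinarith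
  have hCw := (hw hw1).trans (le_max_left C 0)
  constructor
  · exact (le_mul_of_one_le_left (norm_nonneg _) (le_max_right _ _)).trans hCw
  · rw [mul_comm, ← inv_mul_le_iff₀ hx]
    exact (mul_le_mul_of_nonneg_right (le_max_left _ _) (norm_nonneg _)).trans hCw

lemma littleLZ.exists_ae_norm_le {ν : ℂ → ℂ} (hν : littleLZ ν) {ε : ℝ} (hε : 0 < ε) :
    ∃ t, 0 < t ∧ t ≤ 1 ∧
      ∀ᵐ w : ℂ, 1 < ‖w‖ → ‖w‖ < 1 + t → ‖ν w‖ ≤ ε * (‖w‖ ^ 2 - 1) := by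
  obtain ⟨t, ht, hνt⟩ := hν ε hε
  refine ⟨min t 1, lt_min ht one_pos, min_le_right _ _, hνt.mono fun w hw hw1 hwt ↦ ?_⟩
  rw [mul_comm, ← inv_mul_le_iff₀ (by nlinarith)]
  exact hw hw1 (hwt.trans_le (by gcongr; exact min_le_left _ _))

/-- for `ν ∈ L^Z_0(𝔻*)`, the holomorphic function
`φ(z) = ∫_{𝔻*} ν(w)/(w−z)⁴ dA(w)` on `𝔻` satisfies
`lim_{|z|→1} (1−|z|²)|φ(z)| = 0`; that is, `φ ∈ A^Z_0(𝔻)`. -/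
theorem integral_operator_into_littleAZ (ν : ℂ → ℂ)
    (hν : memLZ ν) (hν0 : littleLZ ν) :
    (∃ C : ℝ, ∀ z ∈ ball (0:ℂ) 1,
      (1 - ‖z‖ ^ 2) *
        ‖∫ w in extDisk, ν w / (w - z) ^ 4‖ ≤ C) ∧
    (∀ ε : ℝ, 0 < ε → ∃ t : ℝ, 0 < t ∧ ∀ z : ℂ,
      1 - t < ‖z‖ → ‖z‖ < 1 →
        (1 - ‖z‖ ^ 2) *
          ‖∫ w in extDisk, ν w / (w - z) ^ 4‖ ≤ ε) := by
  obtain ⟨C, hC0, hC⟩ := hν.exists_ae_norm_le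
  have hfar : ∀ᵐ w : ℂ, 1 < ‖w‖ → ‖ν w‖ ≤ C := hC.mono fun w hw hw1 ↦ (hw hw1).1
  constructor
  · refine ⟨14 * Real.pi * C, fun z hz ↦ ?_⟩
    have hz1 : ‖z‖ < 1 := mem_ball_zero_iff.1 hz
    refine (one_sub_sq_mul_norm_setIntegral_extDisk_le hC0 hC0 one_pos le_rfl
      (hC.mono fun w hw hw1 _ ↦ (hw hw1).2) hfar hz1).trans ?_
    have : 0 ≤ Real.pi * C * ‖z‖ := by positivity
    linarith [show 2 * Real.pi * C / 1 ^ 2 * (1 - ‖z‖) = 2 * Real.pi * C * (1 - ‖z‖) by ring]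
  · intro ε hε
    obtain ⟨t, ht, ht1, hnear⟩ := hν0.exists_ae_norm_le (ε := ε / (24 * Real.pi)) (by positivity)
    set K := 2 * Real.pi * C / t ^ 2
    have hK : 0 ≤ K := by positivity
    have hKδ : (K + 1) * (ε / (2 * (K + 1))) = ε / 2 := by field_simp
    refine ⟨ε / (2 * (K + 1)), by positivity, fun z hz hz1 ↦ ?_⟩
    refine (one_sub_sq_mul_norm_setIntegral_extDisk_le (by positivity) hC0 ht ht1 hnear hfar
      hz1).trans ?_
    have h12 : 12 * Real.pi * (ε / (24 * Real.pi)) = ε / 2 := by field_simp; ring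
    nlinarith [mul_le_mul_of_nonneg_left hz.le hK]
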